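/- Let n ≥ 2, let φ : (0,∞) → ℝ be continuous and strictly monotone, and let p₁,…,pₙ > 0 with p₁+…+pₙ = 1. Then the weighted quasiarithmetic mean A_p^{[φ]} is homogeneous (i.e. A_p^{[φ]}(tx₁,…,txₙ) = t·A_p^{[φ]}(x₁,…,xₙ) for all t, x₁,…,xₙ > 0) if and only if there exist a, b, r ∈ ℝ with a ≠ 0 such that either r ≠ 0 and φ(t) = a·t^r + b for all t > 0, or r = 0 and φ(t) = a·log t + b for all t > 0; equivalently, if and only if A_p^{[φ]}(x₁,…,xₙ) = (Σⱼ pⱼ xⱼ^r)^{1/r} for some r ≠ 0, or A_p^{[φ]}(x₁,…,xₙ) = ∏ⱼ xⱼ^{pⱼ}. -/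

import Mathlib

open Set Function

/-! Testing homogeneity of the mean on the vectors `(u, v, …, v)` shows that for each `t > 0` the
map `g y = φ (t * φ⁻¹ y)` satisfies the weighted Jensen equation
`g (P * y₁ + Q * y₂) = P * g y₁ + Q * g y₂`, with `P = p 0` and `Q = 1 - P`, on the interval
`φ '' Ioi 0`; being monotone, it is affine there. Hence
`φ (t * x) = a t * φ x + b t`, and expanding `φ (s * t * x)` in two ways gives
`a (s * t) = a s * a t` and `b (s * t) = a s * b t + b s`. By continuity these Cauchy equations
force `a t = t ^ r`, and then `b t = c * (1 - t ^ r)` if `r ≠ 0` or `b t = c * log t` if `r = 0`;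
evaluating at `x = 1` gives the form of `φ`. The converse is a direct computation. -/

lemma exists_bracket_of_combo_mem {S : Set ℝ} {P Q u v : ℝ} (hP : 0 ≤ P)
    (hPQ : P + Q = 1) (hu : u ∈ S) (hv : v ∈ S)
    (hS : ∀ s ∈ S, ∀ t ∈ S, P * s + Q * t ∈ S) (k : ℕ) {w : ℝ} (hw : w ∈ Icc u v) :
    ∃ s ∈ S, ∃ t ∈ S, s ≤ w ∧ w ≤ t ∧ t - s ≤ max P Q ^ k * (v - u) := by
  induction k with
  | zero => exact ⟨u, hu, v, hv, hw.1, hw.2, by simp⟩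
  | succ k ih =>
    obtain ⟨s, hs, t, ht, hsw, hwt, hst⟩ := ih
    have hmax : 0 ≤ max P Q := hP.trans (le_max_left _ _)
    have hts : 0 ≤ t - s := by linarith
    rcases le_total w (P * s + Q * t) with h | h
    · refine ⟨s, hs, _, hS s hs t ht, hsw, h, ?_⟩
      calc P * s + Q * t - s = Q * (t - s) := by linear_combination s * hPQ
        _ ≤ max P Q * (max P Q ^ k * (v - u)) := mul_le_mul (le_max_right _ _) hst hts hmax
        _ = max P Q ^ (k + 1) * (v - u) := by ring
    · refine ⟨_, hS s hs t ht, t, ht, h, hwt, ?_⟩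
      calc t - (P * s + Q * t) = P * (t - s) := by linear_combination (-t) * hPQ
        _ ≤ max P Q * (max P Q ^ k * (v - u)) := mul_le_mul (le_max_left _ _) hst hts hmax
        _ = max P Q ^ (k + 1) * (v - u) := by ring

section Jensen

variable {J : Set ℝ} {g : ℝ → ℝ} {P Q : ℝ}

/-- The points where `g` meets its chord over `[u, v]` are closed under weighted means, hence dense
in `[u, v]`, and monotonicity squeezes `g` onto the chord in between. -/
lemma MonotoneOn.eq_interpolate_of_jensen (hg : MonotoneOn g J) (hJ : Convex ℝ J)
    (hP : 0 < P) (hQ : 0 < Q) (hPQ : P + Q = 1)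
    (hjensen : ∀ y₁ ∈ J, ∀ y₂ ∈ J, g (P * y₁ + Q * y₂) = P * g y₁ + Q * g y₂)
    {u v w : ℝ} (hu : u ∈ J) (hv : v ∈ J) (huv : u < v) (hw : w ∈ Icc u v) :
    g w = g u + (w - u) * ((g v - g u) / (v - u)) := by
  set c := (g v - g u) / (v - u)
  set ℓ : ℝ → ℝ := fun y => g u + (y - u) * c
  have hc : 0 ≤ c := div_nonneg (sub_nonneg.2 (hg hu hv huv.le)) (sub_nonneg.2 huv.le)
  have hIJ : Icc u v ⊆ J := hJ.ordConnected.out hu hv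
  set S := {y ∈ Icc u v | g y = ℓ y}
  have huS : u ∈ S := ⟨left_mem_Icc.2 huv.le, by simp [ℓ]⟩
  have hvS : v ∈ S := ⟨right_mem_Icc.2 huv.le, by
    simp only [ℓ, c]
    field_simp [(sub_pos.2 huv).ne']
    ring⟩
  have hS : ∀ s ∈ S, ∀ t ∈ S, P * s + Q * t ∈ S := by
    rintro s ⟨hs, hgs⟩ t ⟨ht, hgt⟩
    refine ⟨by simpa using convex_Icc u v hs ht hP.le hQ.le hPQ, ?_⟩
    rw [hjensen s (hIJ hs) t (hIJ ht), hgs, hgt]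
    simp only [ℓ]
    linear_combination (g u - u * c) * hPQ
  have hbound : ∀ k : ℕ, |g w - ℓ w| ≤ max P Q ^ k * ((v - u) * c) := by
    intro k
    obtain ⟨s, ⟨hs, hgs⟩, t, ⟨ht, hgt⟩, hsw, hwt, hst⟩ :=
      exists_bracket_of_combo_mem hP.le hPQ huS hvS hS k hw
    have hgsw : g s ≤ g w := hg (hIJ hs) (hIJ hw) hsw
    have hgwt : g w ≤ g t := hg (hIJ hw) (hIJ ht) hwt
    have hwidth : (t - s) * c ≤ max P Q ^ k * (v - u) * c := mul_le_mul_of_nonneg_right hst hc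
    have h₁ : (t - w) * c ≤ (t - s) * c := mul_le_mul_of_nonneg_right (by linarith) hc
    have h₂ : (w - s) * c ≤ (t - s) * c := mul_le_mul_of_nonneg_right (by linarith) hc
    simp only [ℓ] at hgs hgt ⊢
    rw [abs_le]
    constructor <;> nlinarith
  have hq : max P Q < 1 := max_lt (by linarith) (by linarith)
  have hlim := (tendsto_pow_atTop_nhds_zero_of_lt_one (hP.le.trans (le_max_left _ _)) hq
    ).mul_const ((v - u) * c)
  rw [zero_mul] at hlim
  exact sub_eq_zero.1 (abs_nonpos_iff.1 (ge_of_tendsto' hlim hbound))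

lemma MonotoneOn.exists_affine_of_jensen (hg : MonotoneOn g J) (hJ : Convex ℝ J)
    (hP : 0 < P) (hQ : 0 < Q) (hPQ : P + Q = 1)
    (hjensen : ∀ y₁ ∈ J, ∀ y₂ ∈ J, g (P * y₁ + Q * y₂) = P * g y₁ + Q * g y₂) :
    ∃ α β : ℝ, ∀ y ∈ J, g y = α * y + β := by
  rcases J.subsingleton_or_nontrivial with hsub | hnt
  · rcases J.eq_empty_or_nonempty with rfl | ⟨y₀, hy₀⟩
    · exact ⟨0, 0, by simp⟩
    · exact ⟨0, g y₀, fun y hy => by rw [hsub hy hy₀]; ring⟩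
  obtain ⟨u, hu, v, hv, huv⟩ := hnt.exists_lt
  refine ⟨(g v - g u) / (v - u), g u - (g v - g u) / (v - u) * u, fun y hy => ?_⟩
  have hm : min u y ∈ J := by
    rcases min_choice u y with h | h <;> rw [h] <;> assumption
  have hM : max v y ∈ J := by
    rcases max_choice v y with h | h <;> rw [h] <;> assumption
  have hmM : min u y < max v y := (min_le_left u y).trans_lt (huv.trans_le (le_max_left v y))
  have interp := fun w (hw : w ∈ Icc (min u y) (max v y)) =>
    hg.eq_interpolate_of_jensen hJ hP hQ hPQ hjensen hm hM hmM hw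
  have eu := interp u ⟨min_le_left _ _, huv.le.trans (le_max_left _ _)⟩
  have ev := interp v ⟨(min_le_left _ _).trans huv.le, le_max_left _ _⟩
  have ey := interp y ⟨min_le_right _ _, le_max_right _ _⟩
  have hslope : (g v - g u) / (v - u) = (g (max v y) - g (min u y)) / (max v y - min u y) := by
    rw [ev, eu, div_eq_iff (sub_pos.2 huv).ne']
    ring
  rw [hslope, ey, eu]
  ring

end Jensen

lemma exists_eq_mul_log_of_map_mul {f : ℝ → ℝ} (hf : ContinuousOn f (Ioi 0))
    (hmul : ∀ s > 0, ∀ t > 0, f (s * t) = f s + f t) :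
    ∃ c : ℝ, ∀ t > 0, f t = c * Real.log t := by
  let L : ℝ →+ ℝ := AddMonoidHom.mk' (fun x => f (Real.exp x)) fun x y => by
    simp only [Real.exp_add]
    exact hmul _ (Real.exp_pos x) _ (Real.exp_pos y)
  have hL : Continuous L := hf.comp_continuous Real.continuous_exp fun x => Real.exp_pos x
  refine ⟨L 1, fun t ht => ?_⟩
  have h := map_real_smul L hL (Real.log t) 1
  simp only [smul_eq_mul, mul_one] at h
  rw [mul_comm, ← h]
  simp [L, Real.exp_log ht]

lemma exists_eq_rpow_of_map_mul {a : ℝ → ℝ} (ha : ContinuousOn a (Ioi 0))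
    (ha0 : ∀ t > 0, a t ≠ 0) (hmul : ∀ s > 0, ∀ t > 0, a (s * t) = a s * a t) :
    ∃ r : ℝ, ∀ t > 0, a t = t ^ r := by
  have hpos : ∀ t > 0, 0 < a t := fun t ht => by
    have hsqrt := Real.sqrt_pos.2 ht
    rw [← Real.mul_self_sqrt ht.le, hmul _ hsqrt _ hsqrt]
    exact mul_self_pos.2 (ha0 _ hsqrt)
  obtain ⟨r, hr⟩ := exists_eq_mul_log_of_map_mul
    (f := fun t => Real.log (a t)) (ha.log fun t ht => ha0 t ht) fun s hs t ht => by
      simp only [hmul s hs t ht, Real.log_mul (ha0 s hs) (ha0 t ht)]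
  refine ⟨r, fun t ht => ?_⟩
  rw [Real.rpow_def_of_pos ht, mul_comm, ← hr t ht, Real.exp_log (hpos t ht)]

lemma exists_eq_mul_one_sub_rpow_of_cocycle {b : ℝ → ℝ} {r : ℝ} (hr : r ≠ 0)
    (hb : ∀ s > 0, ∀ t > 0, b (s * t) = s ^ r * b t + b s) :
    ∃ β : ℝ, ∀ t > 0, b t = β * (1 - t ^ r) := by
  have h2r : 1 - (2 : ℝ) ^ r ≠ 0 := by
    rw [sub_ne_zero, ne_comm, Ne, ← Real.rpow_zero 2, Real.rpow_right_inj two_pos (by norm_num)]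
    exact hr
  refine ⟨b 2 / (1 - 2 ^ r), fun t ht => ?_⟩
  -- `b (t * 2) = b (2 * t)`, expanded in both ways
  have h := (hb t ht 2 two_pos).symm.trans (mul_comm t 2 ▸ hb 2 two_pos t ht)
  field_simp
  linear_combination h

lemma eq_and_eq_of_affine_eq_affine {α β α' β' y₁ y₂ : ℝ} (hy : y₁ ≠ y₂)
    (h₁ : α * y₁ + β = α' * y₁ + β') (h₂ : α * y₂ + β = α' * y₂ + β') : α = α' ∧ β = β' := by
  have hα : α = α' := by
    have h : (α - α') * (y₁ - y₂) = 0 := by linear_combination h₁ - h₂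
    simpa [sub_eq_zero, hy] using h
  exact ⟨hα, by subst hα; linarith⟩

lemma exists_cocycle_of_affine_comp_mul {φ : ℝ → ℝ} (hφ_cont : ContinuousOn φ (Ioi 0))
    (hinj : InjOn φ (Ioi 0))
    (haff : ∀ t > 0, ∃ α β : ℝ, ∀ x > 0, φ (t * x) = α * φ x + β) :
    ∃ a b : ℝ → ℝ, ContinuousOn a (Ioi 0) ∧ ContinuousOn b (Ioi 0) ∧ (∀ t > 0, a t ≠ 0) ∧
      (∀ s > 0, ∀ t > 0, a (s * t) = a s * a t ∧ b (s * t) = a s * b t + b s) ∧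
      ∀ t > 0, φ t = a t * φ 1 + b t := by
  choose! a b hab using haff
  have h12 : φ 2 ≠ φ 1 := hinj.ne (by norm_num) (by norm_num) (by norm_num)
  have hφ : ∀ t > 0, φ t = a t * φ 1 + b t := fun t ht => by simpa using hab t ht 1 one_pos
  have ha_eq : EqOn a (fun t => (φ (t * 2) - φ t) / (φ 2 - φ 1)) (Ioi 0) := fun t ht => by
    rw [eq_div_iff (sub_ne_zero.2 h12), hab t ht 2 two_pos, hφ t ht]
    ring
  have ha_cont : ContinuousOn a (Ioi 0) := by
    refine ContinuousOn.congr ?_ ha_eq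
    exact ((hφ_cont.comp (continuous_mul_const 2).continuousOn
      fun t (ht : 0 < t) => mul_pos ht two_pos).sub hφ_cont).div_const _
  have hb_cont : ContinuousOn b (Ioi 0) :=
    (hφ_cont.sub (ha_cont.mul continuousOn_const)).congr fun t ht => by
      show b t = φ t - a t * φ 1
      linarith [hφ t ht]
  have ha0 : ∀ t > 0, a t ≠ 0 := fun t ht h => by
    have h' : φ (t * 2) = φ (t * 1) := by
      rw [hab t ht 2 two_pos, hab t ht 1 one_pos, h, zero_mul, zero_mul]
    have := hinj (mul_pos ht two_pos) (mul_pos ht one_pos) h'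
    linarith
  refine ⟨a, b, ha_cont, hb_cont, ha0, fun s hs t ht => ?_, hφ⟩
  have hcomp : ∀ x > 0, a (s * t) * φ x + b (s * t) = a s * a t * φ x + (a s * b t + b s) :=
    fun x hx => by
      rw [← hab _ (mul_pos hs ht) x hx, mul_assoc, hab s hs _ (mul_pos ht hx), hab t ht x hx]
      ring
  exact eq_and_eq_of_affine_eq_affine h12 (hcomp 2 two_pos) (hcomp 1 one_pos)

theorem exists_rpow_or_log_of_affine_comp_mul {φ : ℝ → ℝ} (hφ_cont : ContinuousOn φ (Ioi 0))
    (hinj : InjOn φ (Ioi 0))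
    (haff : ∀ t > 0, ∃ α β : ℝ, ∀ x > 0, φ (t * x) = α * φ x + β) :
    ∃ a b r : ℝ, a ≠ 0 ∧
      ((r ≠ 0 ∧ ∀ t : ℝ, 0 < t → φ t = a * t ^ r + b) ∨
        (r = 0 ∧ ∀ t : ℝ, 0 < t → φ t = a * Real.log t + b)) := by
  obtain ⟨a, b, ha_cont, hb_cont, ha0, hcocycle, hφ⟩ :=
    exists_cocycle_of_affine_comp_mul hφ_cont hinj haff
  have h12 : φ 2 ≠ φ 1 := hinj.ne (by norm_num) (by norm_num) (by norm_num)
  obtain ⟨r, har⟩ := exists_eq_rpow_of_map_mul ha_cont ha0 fun s hs t ht => (hcocycle s hs t ht).1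
  have hb : ∀ s > 0, ∀ t > 0, b (s * t) = s ^ r * b t + b s := fun s hs t ht => by
    rw [(hcocycle s hs t ht).2, har s hs]
  by_cases hr : r = 0
  · subst hr
    obtain ⟨c, hc⟩ := exists_eq_mul_log_of_map_mul hb_cont fun s hs t ht => by
      rw [hb s hs t ht, Real.rpow_zero, one_mul, add_comm]
    have hform : ∀ t > 0, φ t = c * Real.log t + φ 1 := fun t ht => by
      rw [hφ t ht, har t ht, hc t ht, Real.rpow_zero]; ring
    refine ⟨c, φ 1, 0, fun hc0 => h12 ?_, Or.inr ⟨rfl, hform⟩⟩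
    rw [hform 2 two_pos, hc0]
    simp
  · obtain ⟨β, hβ⟩ := exists_eq_mul_one_sub_rpow_of_cocycle hr hb
    have hform : ∀ t > 0, φ t = (φ 1 - β) * t ^ r + β := fun t ht => by
      rw [hφ t ht, har t ht, hβ t ht]; ring
    refine ⟨φ 1 - β, β, r, fun hc0 => h12 ?_, Or.inl ⟨hr, hform⟩⟩
    rw [hform 2 two_pos, hc0, zero_mul, zero_add]
    linarith

theorem forall_exists_affine_comp_mul_of_homogeneous {φ : ℝ → ℝ} {P Q : ℝ}
    (hφ_cont : ContinuousOn φ (Ioi 0))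
    (hφ_mono : StrictMonoOn φ (Ioi 0) ∨ StrictAntiOn φ (Ioi 0))
    (hP : 0 < P) (hQ : 0 < Q) (hPQ : P + Q = 1)
    (hhom : ∀ t > 0, ∀ u > 0, ∀ v > 0,
      φ (t * invFunOn φ (Ioi 0) (P * φ u + Q * φ v)) = P * φ (t * u) + Q * φ (t * v)) :
    ∀ t > 0, ∃ α β : ℝ, ∀ x > 0, φ (t * x) = α * φ x + β := by
  intro t ht
  have hinj : InjOn φ (Ioi 0) := hφ_mono.elim StrictMonoOn.injOn StrictAntiOn.injOn
  set g : ℝ → ℝ := fun y => φ (t * invFunOn φ (Ioi 0) y)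
  have hg : ∀ x > 0, g (φ x) = φ (t * x) := fun x hx => by
    simp only [g, hinj.leftInvOn_invFunOn hx]
  have hJ : Convex ℝ (φ '' Ioi 0) :=
    Real.convex_iff_isPreconnected.2 (isPreconnected_Ioi.image φ hφ_cont)
  have hg_mono : MonotoneOn g (φ '' Ioi 0) := by
    rintro _ ⟨x₁, hx₁, rfl⟩ _ ⟨x₂, hx₂, rfl⟩ h
    have htx₁ : t * x₁ ∈ Ioi 0 := mul_pos ht hx₁
    have htx₂ : t * x₂ ∈ Ioi 0 := mul_pos ht hx₂
    rw [hg x₁ hx₁, hg x₂ hx₂]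
    rcases hφ_mono with hφ | hφ
    · rw [hφ.le_iff_le hx₁ hx₂] at h
      exact (hφ.le_iff_le htx₁ htx₂).2 (mul_le_mul_of_nonneg_left h ht.le)
    · rw [hφ.le_iff_ge hx₁ hx₂] at h
      exact (hφ.le_iff_ge htx₁ htx₂).2 (mul_le_mul_of_nonneg_left h ht.le)
  have hjensen : ∀ y₁ ∈ φ '' Ioi 0, ∀ y₂ ∈ φ '' Ioi 0,
      g (P * y₁ + Q * y₂) = P * g y₁ + Q * g y₂ := by
    rintro _ ⟨x₁, hx₁, rfl⟩ _ ⟨x₂, hx₂, rfl⟩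
    rw [hg x₁ hx₁, hg x₂ hx₂]
    exact hhom t ht x₁ hx₁ x₂ hx₂
  obtain ⟨α, β, hαβ⟩ := hg_mono.exists_affine_of_jensen hJ hP hQ hPQ hjensen
  exact ⟨α, β, fun x hx => by rw [← hg x hx, hαβ _ (mem_image_of_mem φ hx)]⟩

noncomputable def quasiArithMean {ι : Type*} [Fintype ι] (φ : ℝ → ℝ) (p x : ι → ℝ) : ℝ :=
  invFunOn φ (Ioi 0) (∑ j, p j * φ (x j))

section QuasiArithMean

variable {ι : Type*} [Fintype ι] {φ : ℝ → ℝ} {p x : ι → ℝ}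

lemma apply_quasiArithMean (hφ_cont : ContinuousOn φ (Ioi 0)) (hp : ∀ j, 0 ≤ p j)
    (hp1 : ∑ j, p j = 1) (hx : ∀ j, 0 < x j) :
    φ (quasiArithMean φ p x) = ∑ j, p j * φ (x j) := by
  have hJ : Convex ℝ (φ '' Ioi 0) :=
    Real.convex_iff_isPreconnected.2 (isPreconnected_Ioi.image φ hφ_cont)
  exact invFunOn_eq (hJ.sum_mem (fun j _ => hp j) hp1 fun j _ => mem_image_of_mem φ (hx j))

lemma quasiArithMean_eq_of_apply_eq (hinj : InjOn φ (Ioi 0)) {z : ℝ} (hz : 0 < z)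
    (h : φ z = ∑ j, p j * φ (x j)) : quasiArithMean φ p x = z := by
  rw [quasiArithMean, ← h, hinj.leftInvOn_invFunOn hz]

lemma quasiArithMean_eq_powerMean (hinj : InjOn φ (Ioi 0)) {a b r : ℝ} (hr : r ≠ 0)
    (hφ : ∀ t > 0, φ t = a * t ^ r + b) (hp : ∀ j, 0 < p j) (hp1 : ∑ j, p j = 1)
    (hx : ∀ j, 0 < x j) : quasiArithMean φ p x = (∑ j, p j * x j ^ r) ^ (1 / r) := by
  have hne : (Finset.univ : Finset ι).Nonempty :=
    Finset.nonempty_of_sum_ne_zero (hp1.trans_ne one_ne_zero)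
  have hS : 0 < ∑ j, p j * x j ^ r :=
    Finset.sum_pos (fun j _ => mul_pos (hp j) (Real.rpow_pos_of_pos (hx j) r)) hne
  refine quasiArithMean_eq_of_apply_eq hinj (Real.rpow_pos_of_pos hS _) ?_
  rw [hφ _ (Real.rpow_pos_of_pos hS _), ← Real.rpow_mul hS.le, one_div_mul_cancel hr,
    Real.rpow_one]
  simp only [fun j => hφ _ (hx j), mul_add, Finset.sum_add_distrib, ← Finset.sum_mul, hp1,
    Finset.mul_sum]
  ring_nf

lemma quasiArithMean_eq_geomMean (hinj : InjOn φ (Ioi 0)) {a b : ℝ}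
    (hφ : ∀ t > 0, φ t = a * Real.log t + b) (hp1 : ∑ j, p j = 1) (hx : ∀ j, 0 < x j) :
    quasiArithMean φ p x = ∏ j, x j ^ p j := by
  have hG : 0 < ∏ j, x j ^ p j := Finset.prod_pos fun j _ => Real.rpow_pos_of_pos (hx j) _
  refine quasiArithMean_eq_of_apply_eq hinj hG ?_
  rw [hφ _ hG, Real.log_prod fun j _ => (Real.rpow_pos_of_pos (hx j) _).ne']
  simp only [fun j => hφ _ (hx j), fun j => Real.log_rpow (hx j), mul_add,
    Finset.sum_add_distrib, ← Finset.sum_mul, hp1, Finset.mul_sum]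
  ring_nf

end QuasiArithMean

lemma powerMean_mul {ι : Type*} [Fintype ι] {p x : ι → ℝ} {r t : ℝ} (hr : r ≠ 0) (ht : 0 ≤ t)
    (hp : ∀ j, 0 ≤ p j) (hx : ∀ j, 0 ≤ x j) :
    (∑ j, p j * (t * x j) ^ r) ^ (1 / r) = t * (∑ j, p j * x j ^ r) ^ (1 / r) := by
  simp only [Real.mul_rpow ht (hx _), mul_left_comm _ (t ^ r), ← Finset.mul_sum]
  rw [Real.mul_rpow (Real.rpow_nonneg ht r)
      (Finset.sum_nonneg fun j _ => mul_nonneg (hp j) (Real.rpow_nonneg (hx j) r)),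
    ← Real.rpow_mul ht, mul_one_div_cancel hr, Real.rpow_one]

lemma geomMean_mul {ι : Type*} [Fintype ι] {p x : ι → ℝ} {t : ℝ} (ht : 0 < t)
    (hp1 : ∑ j, p j = 1) (hx : ∀ j, 0 ≤ x j) :
    ∏ j, (t * x j) ^ p j = t * ∏ j, x j ^ p j := by
  simp only [Real.mul_rpow ht.le (hx _), Finset.prod_mul_distrib, ← Real.rpow_sum_of_pos ht,
    hp1, Real.rpow_one]

lemma sum_mul_comp_cons_const {m : ℕ} (p : Fin (m + 1) → ℝ) (hp1 : ∑ j, p j = 1)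
    (f : ℝ → ℝ) (u v : ℝ) :
    ∑ j, p j * f ((Fin.cons u fun _ => v : Fin (m + 1) → ℝ) j) =
      p 0 * f u + (1 - p 0) * f v := by
  rw [Fin.sum_univ_succ] at hp1 ⊢
  simp only [Fin.cons_zero, Fin.cons_succ, ← Finset.sum_mul]
  rw [← hp1, add_sub_cancel_left]

lemma quasiArithMean_two_point_homogeneous {m : ℕ} {φ : ℝ → ℝ}
    (hφ_cont : ContinuousOn φ (Ioi 0)) {p : Fin (m + 1) → ℝ} (hp : ∀ j, 0 ≤ p j)
    (hp1 : ∑ j, p j = 1)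
    (hhom : ∀ t > 0, ∀ x : Fin (m + 1) → ℝ, (∀ j, 0 < x j) →
      quasiArithMean φ p (fun j => t * x j) = t * quasiArithMean φ p x) :
    ∀ t > 0, ∀ u > 0, ∀ v > 0, φ (t * invFunOn φ (Ioi 0) (p 0 * φ u + (1 - p 0) * φ v)) =
      p 0 * φ (t * u) + (1 - p 0) * φ (t * v) := by
  intro t ht u hu v hv
  set x : Fin (m + 1) → ℝ := Fin.cons u fun _ => v
  have hx : ∀ j, 0 < x j := Fin.cases hu fun _ => hv
  rw [← sum_mul_comp_cons_const p hp1, ← quasiArithMean, ← hhom t ht x hx,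
    apply_quasiArithMean hφ_cont hp hp1 fun j => mul_pos ht (hx j)]
  exact sum_mul_comp_cons_const p hp1 (fun y => φ (t * y)) u v

/-- Remark 5 of the paper. For `n ≥ 2`, a continuous strictly
monotone `φ : (0,∞) → ℝ` and weights `p₁,…,pₙ > 0` summing to `1`, the weighted
quasiarithmetic mean `A_p^{[φ]}` is homogeneous iff `φ(t) = a·t^r + b` (`r ≠ 0`) or
`φ(t) = a·log t + b` (`r = 0`) for some `a ≠ 0`, iff `A_p^{[φ]}` is a power mean
`(∑ⱼ pⱼ xⱼ^r)^{1/r}` for some `r ≠ 0` or the weighted geometric mean `∏ⱼ xⱼ^{pⱼ}`. -/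
theorem stmt_12 (n : ℕ) (hn : 2 ≤ n) (φ : ℝ → ℝ)
    (hφ_cont : ContinuousOn φ (Ioi 0))
    (hφ_mono : StrictMonoOn φ (Ioi 0) ∨ StrictAntiOn φ (Ioi 0))
    (p : Fin n → ℝ) (hp : ∀ j, 0 < p j) (hp1 : ∑ j, p j = 1)
    (A : (Fin n → ℝ) → ℝ)
    (hA : ∀ x : Fin n → ℝ, (∀ j, 0 < x j) →
      A x = invFunOn φ (Ioi 0) (∑ j, p j * φ (x j))) :
    ((∀ t : ℝ, 0 < t → ∀ x : Fin n → ℝ, (∀ j, 0 < x j) →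
        A (fun j => t * x j) = t * A x) ↔
      ∃ a b r : ℝ, a ≠ 0 ∧
        ((r ≠ 0 ∧ ∀ t : ℝ, 0 < t → φ t = a * t ^ r + b) ∨
          (r = 0 ∧ ∀ t : ℝ, 0 < t → φ t = a * Real.log t + b))) ∧
    ((∀ t : ℝ, 0 < t → ∀ x : Fin n → ℝ, (∀ j, 0 < x j) →
        A (fun j => t * x j) = t * A x) ↔
      ∃ r : ℝ,
        ((r ≠ 0 ∧ ∀ x : Fin n → ℝ, (∀ j, 0 < x j) →
            A x = (∑ j, p j * x j ^ r) ^ (1 / r)) ∨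
          (r = 0 ∧ ∀ x : Fin n → ℝ, (∀ j, 0 < x j) →
            A x = ∏ j, x j ^ p j))) := by
  obtain ⟨m, rfl⟩ := Nat.exists_eq_add_of_le' hn
  have hinj : InjOn φ (Ioi 0) := hφ_mono.elim StrictMonoOn.injOn StrictAntiOn.injOn
  have hA' : ∀ x, (∀ j, 0 < x j) → A x = quasiArithMean φ p x := hA
  have hQ : 0 < 1 - p 0 := by
    rw [← hp1, Fin.sum_univ_succ, add_sub_cancel_left]
    exact Finset.sum_pos (fun i _ => hp i.succ) Finset.univ_nonempty
  have cycle : ∀ {H G M : Prop}, (H → G) → (G → M) → (M → H) → (H ↔ G) ∧ (H ↔ M) :=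
    fun hHG hGM hMH => ⟨⟨hHG, hMH ∘ hGM⟩, ⟨hGM ∘ hHG, hMH⟩⟩
  refine cycle (fun hhom => ?_) ?_ ?_
  · have hhom' : ∀ t > 0, ∀ x, (∀ j, 0 < x j) →
        quasiArithMean φ p (fun j => t * x j) = t * quasiArithMean φ p x := fun t ht x hx => by
      rw [← hA' _ fun j => mul_pos ht (hx j), ← hA' x hx]
      exact hhom t ht x hx
    exact exists_rpow_or_log_of_affine_comp_mul hφ_cont hinj
      (forall_exists_affine_comp_mul_of_homogeneous hφ_cont hφ_mono (hp 0) hQ (by ring)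
        (quasiArithMean_two_point_homogeneous hφ_cont (fun j => (hp j).le) hp1 hhom'))
  · rintro ⟨a, b, r, -, ⟨hr, hφ⟩ | ⟨rfl, hφ⟩⟩
    · exact ⟨r, .inl ⟨hr, fun x hx =>
        (hA' x hx).trans (quasiArithMean_eq_powerMean hinj hr hφ hp hp1 hx)⟩⟩
    · exact ⟨0, .inr ⟨rfl, fun x hx =>
        (hA' x hx).trans (quasiArithMean_eq_geomMean hinj hφ hp1 hx)⟩⟩
  · rintro ⟨r, ⟨hr, hM⟩ | ⟨-, hM⟩⟩ t ht x hx
    · rw [hM _ fun j => mul_pos ht (hx j), hM x hx]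
      exact powerMean_mul hr ht.le (fun j => (hp j).le) fun j => (hx j).le
    · rw [hM _ fun j => mul_pos ht (hx j), hM x hx]
      exact geomMean_mul ht hp1 fun j => (hx j).le
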